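/- arXiv:2104.07550 — 2 statements merged into one kernel-verified Lean document; each statement's English description precedes it below -/
import Mathlib

section
/- In the Dragonfly algebra over a residuated lattice without zero divisors, for any α ∈ L and β, γ ∈ L* with β ≤_ℓ γ, we have α →_D β ≤_ℓ α →_D γ (the residuum is monotone in the second argument when the first argument is a known value). -/
/-!
Away from `*`, `→_D` is the residuum of `L`, which is monotone in its second argument. The only
delicate comparisons involve `*`, which sits just above `0`. Below `α →_D * = *` we need
`α →_D 0 = ¬α = 0` for `α ≠ 0`; this is where the absence of zero divisors enters, via
`¬α ⊗ α = 0`. Above it we need `α → γ ≠ 0` for `γ ≠ 0`, which holds since `γ ≤ α → γ`.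
-/

/-- A linearly ordered (bounded, integral-scale) residuated lattice:
`⊥` plays the role of `0` and `⊤` the role of `1`. -/
class LinResLat (L : Type*) extends LinearOrder L, BoundedOrder L where
  mul : L → L → L
  imp : L → L → L
  mul_comm : ∀ a b : L, mul a b = mul b a
  mul_assoc : ∀ a b c : L, mul (mul a b) c = mul a (mul b c)
  mul_one : ∀ a : L, mul a ⊤ = a
  adjoint : ∀ a b c : L, mul a b ≤ c ↔ a ≤ imp b c
  bot_lt_top : (⊥ : L) < ⊤

/-- The Dragonfly carrier `L* = L ∪ {*}`. -/
inductive Dstar (L : Type*) where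
  | of : L → Dstar L
  | star : Dstar L

namespace Dstar

variable {L : Type*} [LinResLat L]

/-- Dragonfly multiplication `⊗_D`. -/
def dmul : Dstar L → Dstar L → Dstar L
  | of a, of b => of (LinResLat.mul a b)
  | of a, star => if a = ⊥ then of ⊥ else star
  | star, of b => if b = ⊥ then of ⊥ else star
  | star, star => star

/-- Dragonfly meet `∧_D`. -/
def dmeet : Dstar L → Dstar L → Dstar L
  | of a, of b => of (a ⊓ b)
  | of a, star => if a = ⊥ then of ⊥ else star
  | star, of b => if b = ⊥ then of ⊥ else star
  | star, star => star

/-- Dragonfly join `∨_D`. -/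
def djoin : Dstar L → Dstar L → Dstar L
  | of a, of b => of (a ⊔ b)
  | of a, star => if a = ⊥ then star else of a
  | star, of b => if b = ⊥ then star else of b
  | star, star => star

/-- Dragonfly residuum `→_D`. -/
def dimp : Dstar L → Dstar L → Dstar L
  | of a, of b => of (LinResLat.imp a b)
  | of a, star => if a = ⊥ then of ⊤ else star
  | star, of b => if b = ⊥ then star else of b
  | star, star => of ⊤

/-- Embedding of `L*` into `Lex (L × Bool)` realizing the linear order `≤_ℓ`
which extends the order of `L` with `0 <_ℓ * <_ℓ α` for all `α ∈ L \ {0}`. -/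
def emb : Dstar L → Lex (L × Bool)
  | of a => toLex (a, false)
  | star => toLex ((⊥ : L), true)

theorem emb_injective : Function.Injective (emb (L := L)) := by
  intro x y h
  cases x <;> cases y <;>
    simp only [emb, toLex_inj, Prod.mk.injEq] at h <;> simp_all

/-- The linear order `≤_ℓ` on the Dragonfly algebra. -/
instance : LinearOrder (Dstar L) := LinearOrder.lift' emb emb_injective

theorem le_def (x y : Dstar L) : x ≤ y ↔ emb x ≤ emb y := Iff.rfl

instance : OrderBot (Dstar L) where
  bot := of ⊥
  bot_le x := by
    cases x with
    | of a => rw [le_def]; simp only [emb, Prod.Lex.le_iff]; exact bot_le.lt_or_eq.imp id (by simp_all)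
    | star => rw [le_def]; simp [emb, Prod.Lex.le_iff]
instance : OrderTop (Dstar L) where
  top := of ⊤
  le_top x := by
    cases x with
    | of a => rw [le_def]; simp only [emb, Prod.Lex.le_iff]; exact le_top.lt_or_eq.imp id (by simp_all)
    | star => rw [le_def]; simp only [emb, Prod.Lex.le_iff]; exact Or.inl LinResLat.bot_lt_top

theorem bot_eq : (⊥ : Dstar L) = of ⊥ := rfl
theorem top_eq : (⊤ : Dstar L) = of ⊤ := rfl

variable {ι : Type*} [Fintype ι] [DecidableEq ι]

/-- The multiplication-based qualitative (DPR) integral on the Dragonfly algebra: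
`∫^{⊗_D}_{DPR,μ} f = ⋁_{A ⊆ C} (μ(A) ⊗_D ⋀_{i ∈ A} f_i)`. -/
def integMul (μ : Finset ι → Dstar L) (f : ι → Dstar L) : Dstar L :=
  Finset.univ.powerset.sup fun A => dmul (μ A) (A.inf f)

/-- The conjugate capacity `μ^c(A) = μ(C \ A) →_D 0`. -/
def conj (μ : Finset ι → Dstar L) (A : Finset ι) : Dstar L :=
  dimp (μ Aᶜ) (of ⊥)

/-- The residuum-based qualitative (DPR) integral on the Dragonfly algebra:
`∫^{→_D}_{DPR,μ} f = ⋀_{A ⊆ C} (μ^c(A) →_D ⋁_{i ∈ A} f_i)`. -/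
def integImp (μ : Finset ι → Dstar L) (f : ι → Dstar L) : Dstar L :=
  Finset.univ.powerset.inf fun A => dimp (conj μ A) (A.sup f)

end Dstar

namespace LinResLat

variable {L : Type*} [LinResLat L]

theorem mul_imp_le (a b : L) : mul (imp a b) a ≤ b :=
  (adjoint _ _ _).mpr le_rfl

theorem imp_mono_right {a b c : L} (h : b ≤ c) : imp a b ≤ imp a c :=
  (adjoint _ _ _).mp ((mul_imp_le a b).trans h)

theorem top_le_imp_iff {a b : L} : ⊤ ≤ imp a b ↔ a ≤ b := by
  rw [← adjoint, mul_comm, mul_one]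

theorem mul_le_right (a b : L) : mul a b ≤ b :=
  (adjoint _ _ _).mpr (le_top.trans (top_le_imp_iff.mpr le_rfl))

theorem le_imp_self (a b : L) : b ≤ imp a b := by
  rw [← adjoint, mul_comm]
  exact mul_le_right a b

theorem imp_bot_eq_bot (hnzd : ∀ a b : L, mul a b = ⊥ → a = ⊥ ∨ b = ⊥) {a : L} (ha : a ≠ ⊥) :
    imp a ⊥ = ⊥ :=
  (hnzd _ _ (le_bot_iff.mp (mul_imp_le a ⊥))).resolve_right ha

end LinResLat

namespace Dstar

variable {L : Type*} [LinResLat L]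

theorem of_le_of {a b : L} : (of a : Dstar L) ≤ of b ↔ a ≤ b := by
  simp only [le_def, emb, Prod.Lex.toLex_le_toLex, le_refl, and_true, ← le_iff_lt_or_eq]

theorem of_le_star {a : L} : (of a : Dstar L) ≤ star ↔ a = ⊥ := by
  simp [le_def, emb, Prod.Lex.toLex_le_toLex]

theorem star_le_of {a : L} : (star : Dstar L) ≤ of a ↔ a ≠ ⊥ := by
  simp [le_def, emb, Prod.Lex.toLex_le_toLex, bot_lt_iff_ne_bot]

end Dstar

open Dstar in
/-- Over a residuated lattice without zero divisors, for any known value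
`α ∈ L` and `β ≤_ℓ γ` in `L*`, we have `α →_D β ≤_ℓ α →_D γ`. -/
theorem dimp_monotone_known_first_arg {L : Type*} [LinResLat L]
    (hnzd : ∀ a b : L, LinResLat.mul a b = ⊥ → a = ⊥ ∨ b = ⊥)
    (a : L) (y z : Dstar L) (hyz : y ≤ z) :
    dimp (Dstar.of a) y ≤ dimp (Dstar.of a) z := by
  cases y with
  | of b =>
    cases z with
    | of c => exact of_le_of.mpr (LinResLat.imp_mono_right (of_le_of.mp hyz))
    | star =>
      obtain rfl := of_le_star.mp hyz
      by_cases ha : a = ⊥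
      · simp [dimp, ha, of_le_of]
      · simpa [dimp, ha, of_le_star] using LinResLat.imp_bot_eq_bot hnzd ha
  | star =>
    cases z with
    | of c =>
      have hc : c ≠ ⊥ := star_le_of.mp hyz
      by_cases ha : a = ⊥
      · simpa [dimp, ha, of_le_of] using LinResLat.top_le_imp_iff.mpr (bot_le (a := c))
      · simpa [dimp, ha, star_le_of] using ne_bot_of_le_ne_bot hc (LinResLat.le_imp_self a c)
    | star => exact le_rfl
end

section
/- The residuum-based Dragonfly integral is zero exactly when the conjugate capacity of the zero set is one: ∫^{→_D}_{DPR,μ} f = 0 if and only if μ^c({i : f_i = 0}) = 1. -/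
section Aux
variable {L : Type*} [LinResLat L]

lemma lrl_mul_bot (a : L) : LinResLat.mul a ⊥ = ⊥ :=
  le_antisymm (by rw [LinResLat.mul_comm]; exact (LinResLat.adjoint ⊥ a ⊥).2 bot_le) bot_le

lemma lrl_imp_bot (b : L) : LinResLat.imp (⊥ : L) b = ⊤ :=
  le_antisymm le_top ((LinResLat.adjoint ⊤ ⊥ b).1 (by rw [lrl_mul_bot]; exact bot_le))

lemma lrl_imp_bot_bot : LinResLat.imp (⊥ : L) ⊥ = ⊤ := lrl_imp_bot ⊥

lemma lrl_imp_top (b : L) : LinResLat.imp (⊤ : L) b = b :=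
  le_antisymm
    (by have := (LinResLat.adjoint (LinResLat.imp (⊤ : L) b) ⊤ b).2 le_rfl
        rwa [LinResLat.mul_one] at this)
    ((LinResLat.adjoint b ⊤ b).1 (by rw [LinResLat.mul_one]))

lemma lrl_neg_eq_bot (hnzd : ∀ a b : L, LinResLat.mul a b = ⊥ → a = ⊥ ∨ b = ⊥)
    {a : L} (ha : a ≠ ⊥) : LinResLat.imp a ⊥ = ⊥ := by
  have h : LinResLat.mul (LinResLat.imp a ⊥) a = ⊥ :=
    le_antisymm ((LinResLat.adjoint _ a ⊥).2 le_rfl) bot_le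
  rcases hnzd _ _ h with h' | h'
  · exact h'
  · exact absurd h' ha

lemma lrl_bot_ne_top : (⊥ : L) ≠ ⊤ := LinResLat.bot_lt_top.ne

end Aux


open Dstar in
/-- `∫^{→_D}_{DPR,μ} f = 0` if and only if `μ^c({i : f_i = 0}) = 1`. -/
theorem integImp_eq_zero_iff {L ι : Type*} [LinResLat L]
    [Fintype ι] [DecidableEq ι] [Nonempty ι]
    (hnzd : ∀ a b : L, LinResLat.mul a b = ⊥ → a = ⊥ ∨ b = ⊥)
    (μ : Finset ι → Dstar L)
    (hμ0 : μ ∅ = Dstar.of ⊥) (hμ1 : μ Finset.univ = Dstar.of ⊤)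
    (hmono : ∀ A B : Finset ι, A ⊆ B → μ A ≤ μ B)
    (f : ι → Dstar L) :
    integImp μ f = Dstar.of ⊥ ↔
      conj μ (Finset.univ.filter fun i => f i = Dstar.of ⊥) = Dstar.of ⊤ := by
  classical
  set Z := Finset.univ.filter (fun i => f i = Dstar.of ⊥) with hZ
  constructor
  · intro h
    have hne : (Finset.univ.powerset (α := ι)).Nonempty := ⟨∅, by simp⟩
    obtain ⟨A, hA, hAeq⟩ :=
      Finset.exists_mem_eq_inf Finset.univ.powerset hne
        (fun A => dimp (conj μ A) (A.sup f))
    have hterm : dimp (conj μ A) (A.sup f) = Dstar.of ⊥ := by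
      rw [← hAeq]; exact h
    -- analyze μ Aᶜ
    cases hμA : μ Aᶜ with
    | star =>
      exfalso
      have hc : conj μ A = Dstar.star := by
        simp [conj, hμA, dimp]
      rw [hc] at hterm
      cases hs : A.sup f with
      | of b =>
        rw [hs] at hterm
        by_cases hb : b = ⊥
        · simp [dimp, hb] at hterm
        · simp [dimp, hb] at hterm
      | star => rw [hs] at hterm; simp [dimp] at hterm; exact lrl_bot_ne_top hterm.symm
    | of a =>
      by_cases ha : a = ⊥
      · -- conj μ A = of ⊤
        have hc : conj μ A = Dstar.of ⊤ := by
          simp [conj, hμA, dimp, ha, lrl_imp_bot]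
        rw [hc] at hterm
        cases hs : A.sup f with
        | star =>
          rw [hs] at hterm
          simp [dimp, lrl_bot_ne_top.symm] at hterm
        | of b =>
          rw [hs] at hterm
          simp only [dimp, Dstar.of.injEq] at hterm
          rw [lrl_imp_top] at hterm
          subst hterm
          -- A ⊆ Z
          have hAZ : A ⊆ Z := by
            intro i hi
            have := (Finset.sup_eq_bot_iff f A).1 (by rw [← bot_eq] at hs; exact hs) i hi
            simp [hZ, Finset.mem_filter]
            rw [bot_eq] at this
            exact this
          have hsub : Zᶜ ⊆ Aᶜ := Finset.compl_subset_compl.2 hAZ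
          have hle : μ Zᶜ ≤ μ Aᶜ := hmono _ _ hsub
          rw [hμA, ha, ← bot_eq] at hle
          have hZc : μ Zᶜ = Dstar.of ⊥ := by
            rw [← bot_eq]; exact le_bot_iff.1 hle
          simp [conj, hZc, dimp, lrl_imp_bot_bot]
      · -- conj μ A = of ⊥, term is never of ⊥
        exfalso
        have hc : conj μ A = Dstar.of ⊥ := by
          simp [conj, hμA, dimp, lrl_neg_eq_bot hnzd ha]
        rw [hc] at hterm
        cases hs : A.sup f with
        | of b =>
          rw [hs] at hterm
          simp only [dimp, Dstar.of.injEq] at hterm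
          rw [lrl_imp_bot] at hterm
          exact lrl_bot_ne_top hterm.symm
        | star =>
          rw [hs] at hterm
          simp [dimp] at hterm
          exact lrl_bot_ne_top hterm.symm
  · intro h
    have hZsup : Z.sup f = Dstar.of ⊥ := by
      rw [← bot_eq, Finset.sup_eq_bot_iff]
      intro i hi
      rw [bot_eq]
      have := Finset.mem_filter.1 hi
      exact this.2
    have hterm : dimp (conj μ Z) (Z.sup f) = Dstar.of ⊥ := by
      rw [h, hZsup]
      simp [dimp, lrl_imp_top]
    have hle : integImp μ f ≤ Dstar.of ⊥ := by
      rw [← hterm]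
      exact Finset.inf_le (by simp)
    rw [← bot_eq] at hle ⊢
    exact le_bot_iff.1 hle
end
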